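/- Let T be a total finite state transducer, P a DFA, Q a DFA, and d a rational. Suppose there exist functions wed: Q_T × Σ → ℚ with wed(q, c) = d − ed(c, δout(q, c)), and en: Q_P × Q_T × Q_Q → ℚ, such that: (1) en(p0, q0_T, r0) = 0; (2) for all p, q, r and c ∈ Σ, en(p, q, r) ≥ en(δ_P(p,c), δst(q,c), δ*_Q(r, δout(q,c))) − wed(q, c); and (3) for all reachable triples (p, q, r) with p ∈ F_P (reachable meaning there is a string w with δ*_P(p0,w)=p, δst*(q0_T,w)=q, δ*_Q(r0, δout*(q0_T,w))=r), en(p, q, r) ≥ 0. Then for every nonempty string w accepted by P, the aggregate cost of T on w is at most d · len(w). -/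

import Mathlib

/-- Cost structure for Levenshtein distance (restored from older Mathlib). -/
structure Levenshtein.Cost (α β δ : Type*) where
  delete : α → δ
  insert : β → δ
  substitute : α → β → δ

/-- Default unit costs (restored from older Mathlib). -/
def Levenshtein.defaultCost {α : Type*} [DecidableEq α] : Levenshtein.Cost α α ℕ where
  delete _ := 1
  insert _ := 1
  substitute a b := if a = b then 0 else 1

/-- Helper for `suffixLevenshtein` (restored from older Mathlib). -/
def Levenshtein.impl {α β δ : Type*} [AddZeroClass δ] [Min δ] (C : Levenshtein.Cost α β δ)
    (xs : List α) (y : β) (d : {r : List δ // 0 < r.length}) : {r : List δ // 0 < r.length} :=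
  let ⟨ds, w⟩ := d
  xs.zip (ds.zip ds.tail) |>.foldr
    (init := ⟨[C.insert y + ds.getLast (List.length_pos_iff.mp w)], by simp⟩)
    (fun ⟨x, d₀, d₁⟩ ⟨r, w⟩ =>
      ⟨min (C.delete x + r[0]) (min (C.insert y + d₀) (C.substitute x y + d₁)) :: r, by simp⟩)

/-- Levenshtein distances of all suffixes (restored from older Mathlib). -/
def suffixLevenshtein {α β δ : Type*} [AddZeroClass δ] [Min δ] (C : Levenshtein.Cost α β δ)
    (xs : List α) (ys : List β) : {r : List δ // 0 < r.length} :=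
  ys.foldr
    (Levenshtein.impl C xs)
    (xs.foldr (init := ⟨[0], by simp⟩) (fun a ⟨ds, w⟩ => ⟨(C.delete a + ds[0]) :: ds, by simp⟩))

/-- Levenshtein distance (restored from older Mathlib). -/
def levenshtein {α β δ : Type*} [AddZeroClass δ] [Min δ] (C : Levenshtein.Cost α β δ)
    (xs : List α) (ys : List β) : δ :=
  let ⟨r, w⟩ := suffixLevenshtein C xs ys
  r[0]

/-- Edit distance between two strings (lists), with unit insertion/deletion/substitution cost. -/
def ed {A : Type*} [DecidableEq A] (s t : List A) : ℕ :=
  levenshtein Levenshtein.defaultCost s t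

/-- A total finite state transducer. -/
structure FT (Q A : Type*) where
  step : Q → A → Q
  out : Q → A → List A
  start : Q

namespace FT

variable {Q A : Type*} (T : FT Q A)

/-- Extended state-transition function. -/
def stepList : Q → List A → Q
  | q, [] => q
  | q, a :: u => stepList (T.step q a) u

/-- Extended output function. -/
def outList : Q → List A → List A
  | _, [] => []
  | q, a :: u => T.out q a ++ outList (T.step q a) u

/-- The output of the transducer on a word. -/
def output (w : List A) : List A := T.outList T.start w

/-- Aggregate cost of `T` on a word, starting from state `q`. -/
def aggCost [DecidableEq A] : Q → List A → ℕ
  | _, [] => 0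
  | q, a :: u => ed [a] (T.out q a) + aggCost (T.step q a) u

end FT

/-! `en` is a potential on the product of `P`, `T` and `Qd`: one step of the run lowers it by at
most `d` minus the cost of that step. Telescoping along `w` from the initial triple, where it
vanishes, to the reached accepting triple, where it is nonnegative, bounds the aggregate cost by
`d * w.length`. -/

theorem FT.energy_run_le {A SP SQ Q : Type*} [DecidableEq A]
    (P : DFA A SP) (Qd : DFA A SQ) (T : FT Q A) (d : ℚ) (en : SP → Q → SQ → ℚ)
    (hstep : ∀ p q r (c : A), en (P.step p c) (T.step q c) (Qd.evalFrom r (T.out q c)) ≤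
      en p q r + (d - ed [c] (T.out q c)))
    (w : List A) (p : SP) (q : Q) (r : SQ) :
    en (P.evalFrom p w) (T.stepList q w) (Qd.evalFrom r (T.outList q w)) ≤
      en p q r + (d * w.length - T.aggCost q w) := by
  induction w generalizing p q r with
  | nil => simp [FT.stepList, FT.outList, FT.aggCost]
  | cons a u ih =>
    have hhead := hstep p q r a
    have htail := ih (P.step p a) (T.step q a) (Qd.evalFrom r (T.out q a))
    simp only [FT.stepList, FT.outList, FT.aggCost, DFA.evalFrom_cons, DFA.evalFrom_of_append,
      List.length_cons] at htail ⊢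
    push_cast
    linarith

/-- Soundness of the energy-function encoding: the aggregate cost of `T` on any nonempty
string accepted by `P` is at most `d` times its length. -/
theorem energy_soundness {A SP SQ Q : Type*} [DecidableEq A]
    (P : DFA A SP) (Qd : DFA A SQ) (T : FT Q A) (d : ℚ)
    (wed : Q → A → ℚ) (en : SP → Q → SQ → ℚ)
    (hwed : ∀ q c, wed q c = d - ed [c] (T.out q c))
    (h1 : en P.start T.start Qd.start = 0)
    (h2 : ∀ p q r (c : A),
      en p q r ≥ en (P.step p c) (T.step q c) (Qd.evalFrom r (T.out q c)) - wed q c)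
    (h3 : ∀ p q r,
      (∃ w : List A, P.evalFrom P.start w = p ∧ T.stepList T.start w = q ∧
        Qd.evalFrom Qd.start (T.outList T.start w) = r) →
      p ∈ P.accept → en p q r ≥ 0) :
    ∀ w : List A, w ≠ [] → P.evalFrom P.start w ∈ P.accept →
      (T.aggCost T.start w : ℚ) ≤ d * w.length := by
  intro w _ haccept
  have hrun := FT.energy_run_le P Qd T d en
    (fun p q r c => by linarith [h2 p q r c, hwed q c]) w P.start T.start Qd.start
  have hfinal := h3 _ _ _ ⟨w, rfl, rfl, rfl⟩ haccept
  linarith
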